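/- Let G be a connected graph, H a graph, and u a vertex of G. For any two distinct vertices v1, v2 of H, the set of vertices of the corona product G⊙H resolving (u,v1) and (u,v2) equals {(u,v) : v ∈ S_H{v1,v2}}; that is, R_{G⊙H}{(u,v1),(u,v2)} = ⋃_{v ∈ S_H{v1,v2}} {(u,v)}. -/

import Mathlib

open Finset

variable {α β V : Type*}

/-- The corona product `G ⊙ H`. -/
def SimpleGraph.corona (G : SimpleGraph α) (H : SimpleGraph β) :
    SimpleGraph (α ⊕ α × β) where
  Adj x y :=
    match x, y with
    | Sum.inl u1, Sum.inl u2 => G.Adj u1 u2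
    | Sum.inl u1, Sum.inr p => u1 = p.1
    | Sum.inr p, Sum.inl u2 => p.1 = u2
    | Sum.inr p, Sum.inr q => p.1 = q.1 ∧ H.Adj p.2 q.2
  symm := by
    constructor
    rintro (u1 | p) (u2 | q) h
    · exact h.symm
    · exact h.symm
    · exact h.symm
    · exact ⟨h.1.symm, h.2.symm⟩
  loopless := by
    constructor
    rintro (u | p) h
    · exact G.loopless.irrefl u h
    · exact H.loopless.irrefl p.2 h.2

/-- The lexicographic product `G[H]`. -/
def SimpleGraph.lexProd (G : SimpleGraph α) (H : SimpleGraph β) :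
    SimpleGraph (α × β) where
  Adj x y := G.Adj x.1 y.1 ∨ (x.1 = y.1 ∧ H.Adj x.2 y.2)
  symm := by
    constructor
    rintro x y (h | ⟨h1, h2⟩)
    · exact Or.inl h.symm
    · exact Or.inr ⟨h1.symm, h2.symm⟩
  loopless := by
    constructor
    rintro x (h | ⟨h1, h2⟩)
    · exact G.loopless.irrefl _ h
    · exact H.loopless.irrefl _ h2

open scoped Classical in
/-- `R_F{x,y}`: the set of vertices resolving `x` and `y` (distance measured by `edist`,
which is `∞` between vertices in different components). -/
noncomputable def resolvingFinset (F : SimpleGraph V) [Fintype V] (x y : V) : Finset V :=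
  univ.filter fun z => F.edist x z ≠ F.edist y z

/-- `S_H{v₁,v₂} = {v₁,v₂} ∪ (N_H(v₁) Δ N_H(v₂))`. -/
def locatingFinset (H : SimpleGraph V) [Fintype V] [DecidableEq V]
    [DecidableRel H.Adj] (v1 v2 : V) : Finset V :=
  {v1, v2} ∪ symmDiff (H.neighborFinset v1) (H.neighborFinset v2)

/-- A resolving function of `F`. -/
def IsResolvingFn (F : SimpleGraph V) [Fintype V] (g : V → ℝ) : Prop :=
  (∀ v, g v ∈ Set.Icc (0 : ℝ) 1) ∧
    ∀ x y : V, x ≠ y → 1 ≤ ∑ z ∈ resolvingFinset F x y, g z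

/-- The fractional metric dimension `dim_f(F)`. -/
noncomputable def fracMetricDim (F : SimpleGraph V) [Fintype V] : ℝ :=
  sInf {w | ∃ g, IsResolvingFn F g ∧ w = ∑ v, g v}

/-- A locating function of `H`. -/
def IsLocatingFn (H : SimpleGraph V) [Fintype V] [DecidableEq V]
    [DecidableRel H.Adj] (g : V → ℝ) : Prop :=
  (∀ v, g v ∈ Set.Icc (0 : ℝ) 1) ∧
    ∀ v1 v2 : V, v1 ≠ v2 → 1 ≤ ∑ v ∈ locatingFinset H v1 v2, g v

/-- `l_f(H)`: the minimum weight of a locating function. -/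
noncomputable def fracLoc (H : SimpleGraph V) [Fintype V] [DecidableEq V]
    [DecidableRel H.Adj] : ℝ :=
  sInf {w | ∃ g, IsLocatingFn H g ∧ w = ∑ v, g v}

open scoped Classical in
/-- `λ(H)`: maximum number of common neighbours of two adjacent vertices, `-1` if no edges. -/
noncomputable def lambdaMax (H : SimpleGraph V) [Fintype V] : ℤ :=
  if hne : (univ.filter fun p : V × V => H.Adj p.1 p.2).Nonempty then
    (univ.filter fun p : V × V => H.Adj p.1 p.2).sup' hne fun p =>
      ((univ.filter fun w => H.Adj p.1 w ∧ H.Adj p.2 w).card : ℤ)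
  else -1

open scoped Classical in
/-- `μ(H)`: maximum number of common neighbours of two distinct nonadjacent vertices,
`0` for complete graphs. -/
noncomputable def muMax (H : SimpleGraph V) [Fintype V] : ℤ :=
  if hne : (univ.filter fun p : V × V => p.1 ≠ p.2 ∧ ¬H.Adj p.1 p.2).Nonempty then
    (univ.filter fun p : V × V => p.1 ≠ p.2 ∧ ¬H.Adj p.1 p.2).sup' hne fun p =>
      ((univ.filter fun w => H.Adj p.1 w ∧ H.Adj p.2 w).card : ℤ)
  else 0

/-- A graph is vertex-transitive if its automorphism group is transitive on vertices. -/
def IsVertexTransitive (H : SimpleGraph V) : Prop :=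
  ∀ u v : V, ∃ φ : H ≃g H, φ u = v

/-- Two distinct vertices are twins if they have the same closed or the same open
neighbourhood. -/
def SimpleGraph.Twins (G : SimpleGraph V) (u1 u2 : V) : Prop :=
  u1 ≠ u2 ∧ (insert u1 (G.neighborSet u1) = insert u2 (G.neighborSet u2) ∨
    G.neighborSet u1 = G.neighborSet u2)

open scoped Classical in
/-- `m₁(G)`: number of vertices in twin-equivalence classes of type 1 (singletons). -/
noncomputable def m1 (G : SimpleGraph V) [Fintype V] : ℕ :=
  (univ.filter fun u => ∀ w, ¬G.Twins u w).card

open scoped Classical in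
/-- `m₂(G)`: number of vertices in twin-equivalence classes of type 2 (cliques). -/
noncomputable def m2 (G : SimpleGraph V) [Fintype V] : ℕ :=
  (univ.filter fun u => ∃ w, G.Twins u w ∧ G.Adj u w).card

open scoped Classical in
/-- `m₃(G)`: number of vertices in twin-equivalence classes of type 3 (independent sets). -/
noncomputable def m3 (G : SimpleGraph V) [Fintype V] : ℕ :=
  (univ.filter fun u => ∃ w, G.Twins u w ∧ ¬G.Adj u w).card

/-! The vertex `u` separates the copy `^uH` from the rest of `G ⊙ H`, so every vertex outside
`^uH` is seen from `(u,v₁)` and `(u,v₂)` at the same distance `1 + d(u, z)`. Inside `^uH` any two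
vertices are at distance at most `2`, through `u`; hence `(u,v)` sees `(u,vᵢ)` at distance
`0`, `1` or `2` according as `v = vᵢ`, `v ∈ N_H(vᵢ)` or neither, and these two distances differ
exactly when `v ∈ S_H{v₁,v₂}`. -/

namespace SimpleGraph

variable {V : Type*} {F : SimpleGraph V}

lemma Walk.mem_support_of_boundary_eq {S : Set V} {c a z : V}
    (hS : ∀ x ∈ S, ∀ y ∉ S, F.Adj x y → y = c) (ha : a ∈ S) (hz : z ∉ S) (p : F.Walk a z) :
    c ∈ p.support := by
  obtain ⟨d, hd, hfst, hsnd⟩ := p.exists_boundary_dart S ha hz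
  rw [← hS _ hfst _ hsnd d.adj]
  exact p.dart_snd_mem_support_of_mem_darts hd

lemma edist_eq_add_of_boundary_eq {S : Set V} {c a z : V}
    (hS : ∀ x ∈ S, ∀ y ∉ S, F.Adj x y → y = c) (ha : a ∈ S) (hz : z ∉ S) :
    F.edist a z = F.edist a c + F.edist c z := by
  classical
  refine le_antisymm F.edist_triangle ?_
  by_cases hr : F.Reachable a z
  · obtain ⟨p, hp⟩ := hr.exists_walk_length_eq_edist
    have hc := p.mem_support_of_boundary_eq hS ha hz
    rw [← hp, ← p.take_spec hc, Walk.length_append, Nat.cast_add]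
    exact add_le_add (edist_le _) (edist_le _)
  · rw [edist_eq_top_of_not_reachable hr]
    exact le_top

end SimpleGraph

namespace SimpleGraph.corona

variable {α β : Type*} {G : SimpleGraph α} {H : SimpleGraph β}

/-- The copy `^uH`. -/
def copy (u : α) : Set (α ⊕ α × β) := Set.range fun v => Sum.inr (u, v)

lemma boundary_copy_eq (u : α) :
    ∀ x ∈ copy (β := β) u, ∀ y ∉ copy u, (G.corona H).Adj x y → y = Sum.inl u := by
  rintro _ ⟨v, rfl⟩ (w | ⟨w, v'⟩) hy hadj
  · exact congrArg Sum.inl hadj.symm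
  · obtain rfl : u = w := hadj.1
    exact absurd ⟨v', rfl⟩ hy

lemma edist_inr_eq_of_notMem_copy {u : α} {z : α ⊕ α × β} (hz : z ∉ copy u) (v1 v2 : β) :
    (G.corona H).edist (Sum.inr (u, v1)) z = (G.corona H).edist (Sum.inr (u, v2)) z := by
  have hadj (v : β) : (G.corona H).Adj (Sum.inr (u, v)) (Sum.inl u) := rfl
  rw [edist_eq_add_of_boundary_eq (boundary_copy_eq u) (Set.mem_range_self v1) hz,
    edist_eq_add_of_boundary_eq (boundary_copy_eq u) (Set.mem_range_self v2) hz,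
    edist_eq_one_iff_adj.mpr (hadj v1), edist_eq_one_iff_adj.mpr (hadj v2)]

lemma edist_inr_inr_same [DecidableEq β] [DecidableRel H.Adj] (u : α) (v v' : β) :
    (G.corona H).edist (Sum.inr (u, v)) (Sum.inr (u, v')) =
      if v = v' then 0 else if H.Adj v v' then 1 else 2 := by
  split_ifs with heq hadj
  · rw [heq, edist_self]
  · exact edist_eq_one_iff_adj.mpr ⟨rfl, hadj⟩
  · refine edist_eq_two_iff.mpr ⟨by simpa using heq, fun h => hadj h.2, Sum.inl u, ?_⟩
    exact (G.corona H).mem_commonNeighbors.mpr ⟨rfl, rfl⟩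

end SimpleGraph.corona

lemma mem_locatingFinset_iff_ne {β : Type*} [Fintype β] [DecidableEq β] {H : SimpleGraph β}
    [DecidableRel H.Adj] {v1 v2 : β} (hne : v1 ≠ v2) (v : β) :
    v ∈ locatingFinset H v1 v2 ↔
      (if v1 = v then 0 else if H.Adj v1 v then 1 else 2 : ℕ∞) ≠
        if v2 = v then 0 else if H.Adj v2 v then 1 else 2 := by
  simp only [locatingFinset, mem_union, mem_insert, mem_singleton, mem_symmDiff,
    SimpleGraph.mem_neighborFinset]
  by_cases h1 : v1 = v <;> by_cases h2 : v2 = v <;> by_cases a1 : H.Adj v1 v <;>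
    by_cases a2 : H.Adj v2 v <;> simp_all [eq_comm]

open SimpleGraph.corona in
theorem stmt_4_general {α β : Type*} [Fintype α] [Fintype β] [DecidableEq α] [DecidableEq β]
    (G : SimpleGraph α) (H : SimpleGraph β) [DecidableRel H.Adj]
    (u : α) (v1 v2 : β) (hne : v1 ≠ v2) :
    resolvingFinset (G.corona H) (Sum.inr (u, v1)) (Sum.inr (u, v2)) =
      (locatingFinset H v1 v2).image fun v => Sum.inr (u, v) := by
  ext z
  simp only [resolvingFinset, mem_filter, mem_univ, true_and, mem_image]
  by_cases hz : z ∈ copy u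
  · obtain ⟨v, rfl⟩ := hz
    simp only [Sum.inr.injEq, Prod.mk.injEq, true_and, exists_eq_right]
    rw [edist_inr_inr_same, edist_inr_inr_same, mem_locatingFinset_iff_ne hne]
  · refine iff_of_false (not_not.mpr (edist_inr_eq_of_notMem_copy hz v1 v2)) ?_
    rintro ⟨v, -, rfl⟩
    exact hz ⟨v, rfl⟩

/-- In the corona product `G ⊙ H`, for `u ∈ V(G)` and distinct
`v₁, v₂ ∈ V(H)`, `R_{G⊙H}{(u,v₁),(u,v₂)} = {(u,v) : v ∈ S_H{v₁,v₂}}`. -/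
theorem stmt_4 {α β : Type*} [Fintype α] [Fintype β] [DecidableEq α] [DecidableEq β]
    (G : SimpleGraph α) (H : SimpleGraph β) [DecidableRel H.Adj]
    (hG : G.Connected) (hca : 2 ≤ Fintype.card α) (hcb : 2 ≤ Fintype.card β)
    (u : α) (v1 v2 : β) (hne : v1 ≠ v2) :
    resolvingFinset (G.corona H) (Sum.inr (u, v1)) (Sum.inr (u, v2)) =
      (locatingFinset H v1 v2).image fun v => Sum.inr (u, v) :=
  stmt_4_general G H u v1 v2 hne
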